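/- With the definitions below, the privacy vector a* belongs to the set of unilaterally unimprovable privacy levels A_*; that is, a* ∈ A and (a* + ℝ₊^M) ∩ A = {a*}, where A := {a ∈ ℝ^M : α_m ≥ 0 for all m, r(a) ≤ U} and ℝ₊^M is the nonnegative orthant. -/

import Mathlib

open Finset Real

/-- `f(a) = max_m Σ_{m'} (c_m √(R² + α_{m'}²σ²)) / (c_{m'} √(R² + α_m²σ²))`. -/
noncomputable def fval (M : ℕ) (R σ : ℝ) (c a : Fin M → ℝ) : ℝ :=
  ⨆ m, ∑ m', (c m * Real.sqrt (R ^ 2 + (a m') ^ 2 * σ ^ 2))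
    / (c m' * Real.sqrt (R ^ 2 + (a m) ^ 2 * σ ^ 2))

/-- The asymptotic regret-bound constant
`r(a) = 2LK (d(R² + α̃(a)²σ²))^{1/3} (2S√M/λ̌ + √((M−1) + (2 f(a) − 1)²))`. -/
noncomputable def rval (M d : ℕ) (L K S lam R σ : ℝ) (c a : Fin M → ℝ) : ℝ :=
  2 * L * K * (d * (R ^ 2 + (⨆ m, a m) ^ 2 * σ ^ 2)) ^ ((1 : ℝ) / 3)
    * (2 * S * Real.sqrt M / lam
        + Real.sqrt ((M - 1) + (2 * fval M R σ c a - 1) ^ 2))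

/-- `r̃ = (1/σ) √( U³ / (8L³K³ d M^{3/2} (2S/λ̌ + √(4M−3))³) − R² )`. -/
noncomputable def rtil (M d : ℕ) (L K S lam σ U R : ℝ) : ℝ :=
  (1 / σ) * Real.sqrt (U ^ 3
    / (8 * L ^ 3 * K ^ 3 * d * (M : ℝ) ^ ((3 : ℝ) / 2)
        * (2 * S / lam + Real.sqrt (4 * M - 3)) ^ 3) - R ^ 2)

/-- The unimprovable privacy vector `a*`, with
`α*_m = √( (R²/σ² + r̃²) c_m²/c̃² − R²/σ² )` where `c̃ = max_m c_m`. -/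
noncomputable def astar (M d : ℕ) (L K S lam σ U R : ℝ) (c : Fin M → ℝ) :
    Fin M → ℝ := fun m =>
  Real.sqrt ((R ^ 2 / σ ^ 2 + (rtil M d L K S lam σ U R) ^ 2)
      * (c m) ^ 2 / (⨆ m', c m') ^ 2 - R ^ 2 / σ ^ 2)

set_option maxHeartbeats 2000000 in
/-- The privacy vector `a*` belongs to the set of unilaterally unimprovable privacy
levels: `a* ∈ A` and `(a* + ℝ₊^M) ∩ A = {a*}`, where
`A = {a : α_m ≥ 0 ∀m, r(a) ≤ U}`. -/
theorem astar_mem_unimprovable_set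
    (M d : ℕ) [NeZero M] (hd : 0 < d)
    (L K S σ lam U R : ℝ) (hL : 0 < L) (hK : 0 < K) (hS : 0 < S) (hσ : 0 < σ)
    (hlam : 0 < lam) (hU : 0 < U) (hR : 0 ≤ R)
    (c : Fin M → ℝ) (hc : ∀ m, 0 < c m)
    (hrt : 0 < U ^ 3
      / (8 * L ^ 3 * K ^ 3 * d * (M : ℝ) ^ ((3 : ℝ) / 2)
          * (2 * S / lam + Real.sqrt (4 * M - 3)) ^ 3) - R ^ 2)
    (hrad : ∀ m, 0 ≤ (R ^ 2 / σ ^ 2 + (rtil M d L K S lam σ U R) ^ 2)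
        * (c m) ^ 2 / (⨆ m', c m') ^ 2 - R ^ 2 / σ ^ 2)
    (A : Set (Fin M → ℝ))
    (hA : A = {a | (∀ m, 0 ≤ a m) ∧ rval M d L K S lam R σ c a ≤ U}) :
    astar M d L K S lam σ U R c ∈ A ∧
    {b : Fin M → ℝ | ∃ v : Fin M → ℝ, (∀ m, 0 ≤ v m) ∧
        b = astar M d L K S lam σ U R c + v} ∩ A
      = {astar M d L K S lam σ U R c} := by
  classical
  have hM : 0 < M := Nat.pos_of_ne_zero (NeZero.ne M)
  have : Nonempty (Fin M) := ⟨⟨0, hM⟩⟩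
  have hMR : (0:ℝ) < M := by exact_mod_cast hM
  have hM1 : (1:ℝ) ≤ M := by exact_mod_cast hM
  have hB : ∀ f : Fin M → ℝ, BddAbove (Set.range f) := fun f => (Set.finite_range f).bddAbove
  set r := rtil M d L K S lam σ U R with hrdef
  clear_value r
  set as := astar M d L K S lam σ U R c with hasdef
  clear_value as
  set ct := (⨆ m', c m') with hct
  clear_value ct
  have hcle : ∀ m, c m ≤ ct := by intro m; rw [hct]; exact le_ciSup (hB c) m
  have hct_pos : 0 < ct := lt_of_lt_of_le (hc ⟨0, hM⟩) (hcle _)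
  set Q := 2 * S / lam + Real.sqrt (4 * (M:ℝ) - 3) with hQ
  clear_value Q
  have hQpos : 0 < Q := by
    rw [hQ]
    exact add_pos (by positivity) (Real.sqrt_pos.mpr (by nlinarith [hM1]))
  set D := 8 * L ^ 3 * K ^ 3 * (d:ℝ) * (M : ℝ) ^ ((3 : ℝ) / 2) * Q ^ 3 with hD
  clear_value D
  have hdR : (0:ℝ) < d := by exact_mod_cast hd
  have hDpos : 0 < D := by
    have h32 : (0:ℝ) < (M:ℝ) ^ ((3:ℝ)/2) := Real.rpow_pos_of_pos hMR _
    rw [hD]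
    positivity
  -- basic facts about r
  have hr0 : 0 < r := by
    rw [hrdef, rtil, ← hQ, ← hD]
    exact mul_pos (by positivity) (Real.sqrt_pos.mpr hrt)
  have hr2 : r ^ 2 * σ ^ 2 = U ^ 3 / D - R ^ 2 := by
    rw [hrdef, rtil, ← hQ, ← hD, mul_pow, Real.sq_sqrt hrt.le]
    field_simp
  set E := R ^ 2 + r ^ 2 * σ ^ 2 with hE
  clear_value E
  have hEval : E = U ^ 3 / D := by rw [hE, hr2]; ring
  have hEpos : 0 < E := by rw [hE]; positivity
  set sE := Real.sqrt E with hsE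
  clear_value sE
  have hsEpos : 0 < sE := by rw [hsE]; exact Real.sqrt_pos.mpr hEpos
  -- key identity for astar
  have hasm : ∀ m, as m = Real.sqrt ((R ^ 2 / σ ^ 2 + r ^ 2) * (c m) ^ 2 / ct ^ 2 - R ^ 2 / σ ^ 2) := by
    intro m
    rw [hasdef]
    simp only [astar]
    rw [← hrdef, ← hct]
  have hasq : ∀ m, (as m) ^ 2 = (R ^ 2 / σ ^ 2 + r ^ 2) * (c m) ^ 2 / ct ^ 2 - R ^ 2 / σ ^ 2 := by
    intro m; rw [hasm m]; exact Real.sq_sqrt (hrad m)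
  have has_nonneg : ∀ m, 0 ≤ as m := by
    intro m; rw [hasm m]; exact Real.sqrt_nonneg _
  have hkey : ∀ m, R ^ 2 + (as m) ^ 2 * σ ^ 2 = E * (c m) ^ 2 / ct ^ 2 := by
    intro m
    rw [hasq m, hE]
    field_simp
    ring
  have hs : ∀ m, Real.sqrt (R ^ 2 + (as m) ^ 2 * σ ^ 2) = c m / ct * sE := by
    intro m
    rw [hkey m, show E * (c m) ^ 2 / ct ^ 2 = (c m / ct * sE) ^ 2 by
      rw [mul_pow, div_pow, hsE, Real.sq_sqrt hEpos.le]; ring]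
    exact Real.sqrt_sq (mul_nonneg (div_nonneg (hc m).le hct_pos.le) hsEpos.le)
  have has_le : ∀ m, as m ≤ r := by
    intro m
    have h1 := hasq m
    have h2 : (c m) ^ 2 ≤ ct ^ 2 := pow_le_pow_left₀ (hc m).le (hcle m) 2
    have h4 : (R ^ 2 / σ ^ 2 + r ^ 2) * (c m) ^ 2 / ct ^ 2 ≤ R ^ 2 / σ ^ 2 + r ^ 2 := by
      rw [div_le_iff₀ (by positivity : (0:ℝ) < ct ^ 2)]
      have h5 : (0:ℝ) ≤ R ^ 2 / σ ^ 2 + r ^ 2 := by positivity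
      exact mul_le_mul_of_nonneg_left h2 h5
    have h3 : (as m) ^ 2 ≤ r ^ 2 := by
      rw [h1]
      linarith [h4]
    rw [← Real.sqrt_sq (has_nonneg m), ← Real.sqrt_sq hr0.le]
    exact Real.sqrt_le_sqrt h3
  obtain ⟨m₀, hm₀⟩ := Finite.exists_max c
  have hcm₀ : c m₀ = ct := le_antisymm (hcle m₀) (by rw [hct]; exact ciSup_le hm₀)
  have hasm₀ : as m₀ = r := by
    have h1 : (as m₀) ^ 2 = r ^ 2 := by
      rw [hasq m₀, hcm₀]
      field_simp
      ring
    rw [← Real.sqrt_sq (has_nonneg m₀), h1, Real.sqrt_sq hr0.le]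
  have hsup_as : (⨆ m, as m) = r :=
    le_antisymm (ciSup_le has_le) (hasm₀ ▸ le_ciSup (hB as) m₀)
  -- fval at astar equals M
  set sM := Real.sqrt (M:ℝ) with hsM
  clear_value sM
  have hsMpos : 0 < sM := by rw [hsM]; exact Real.sqrt_pos.mpr hMR
  have hsM2 : sM ^ 2 = (M:ℝ) := by rw [hsM]; exact Real.sq_sqrt hMR.le
  have hfas_sum : ∀ m : Fin M,
      (∑ m', (c m * Real.sqrt (R ^ 2 + (as m') ^ 2 * σ ^ 2))
        / (c m' * Real.sqrt (R ^ 2 + (as m) ^ 2 * σ ^ 2))) = M := by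
    intro m
    have h1 : ∀ m' : Fin M, (c m * Real.sqrt (R ^ 2 + (as m') ^ 2 * σ ^ 2))
        / (c m' * Real.sqrt (R ^ 2 + (as m) ^ 2 * σ ^ 2)) = 1 := by
      intro m'
      rw [hs m, hs m']
      field_simp [(hc m).ne', (hc m').ne', hct_pos.ne', hsEpos.ne']
    rw [Finset.sum_congr rfl (fun m' _ => h1 m'), Finset.sum_const, Finset.card_univ,
      Fintype.card_fin]
    simp
  have hfas : fval M R σ c as = M := by
    rw [fval]
    exact le_antisymm (ciSup_le fun m => le_of_eq (hfas_sum m))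
      ((hfas_sum m₀).symm.le.trans (le_ciSup (hB (fun m => ∑ m', (c m * Real.sqrt (R ^ 2 + (as m') ^ 2 * σ ^ 2))
        / (c m' * Real.sqrt (R ^ 2 + (as m) ^ 2 * σ ^ 2)))) m₀))
  -- the cube root computation
  set Y := U / (2 * L * K * sM * Q) with hY
  clear_value Y
  have hYpos : 0 < Y := by rw [hY]; positivity
  have hdE : (d:ℝ) * E = Y ^ 3 := by
    have h32 : (M:ℝ) ^ ((3:ℝ)/2) = sM ^ 3 := by
      rw [hsM, Real.sqrt_eq_rpow, ← Real.rpow_natCast ((M:ℝ) ^ ((1:ℝ)/2)) 3,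
        ← Real.rpow_mul hMR.le]
      norm_num
    rw [hEval, hY, hD, h32]
    field_simp
    ring
  have hcube : ((d:ℝ) * E) ^ ((1:ℝ)/3) = Y := by
    rw [hdE, ← Real.rpow_natCast Y 3, ← Real.rpow_mul hYpos.le]
    norm_num
  -- sqrt((M-1)+(2M-1)^2) = sM * sqrt(4M-3)
  have hsqM : Real.sqrt (((M:ℝ) - 1) + (2 * (M:ℝ) - 1) ^ 2) = sM * Real.sqrt (4 * (M:ℝ) - 3) := by
    rw [show ((M:ℝ) - 1) + (2 * (M:ℝ) - 1) ^ 2 = (M:ℝ) * (4 * (M:ℝ) - 3) by ring,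
      Real.sqrt_mul hMR.le, hsM]
  have hbrk : 2 * S * sM / lam + sM * Real.sqrt (4 * (M:ℝ) - 3) = sM * Q := by
    rw [hQ]; ring
  have hYU : 2 * L * K * Y * (sM * Q) = U := by
    rw [hY]; field_simp
  -- rval at astar equals U
  have hrval_as : rval M d L K S lam R σ c as = U := by
    rw [rval, hsup_as, ← hE, hfas, hcube, ← hsM, hsqM, hbrk, hYU]
  have hasA : as ∈ A := by
    rw [hA]
    exact ⟨has_nonneg, hrval_as.le⟩
  refine ⟨hasA, ?_⟩
  -- part 2
  ext b
  simp only [Set.mem_inter_iff, Set.mem_setOf_eq, Set.mem_singleton_iff]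
  constructor
  · rintro ⟨⟨v, hv, rfl⟩, hbA⟩
    set b := as + v with hb
    clear_value b
    have hb_ge : ∀ m, as m ≤ b m := by intro m; rw [hb]; exact le_add_of_nonneg_right (hv m)
    have hb_nonneg : ∀ m, 0 ≤ b m := fun m => (has_nonneg m).trans (hb_ge m)
    rw [hA] at hbA
    have hrvb : rval M d L K S lam R σ c b ≤ U := hbA.2
    -- positivity of the inner expressions for b
    have hinn_as : ∀ m, 0 < R ^ 2 + (as m) ^ 2 * σ ^ 2 := by
      intro m
      rw [hkey m]
      exact div_pos (mul_pos hEpos (pow_pos (hc m) 2)) (pow_pos hct_pos 2)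
    have hinn_b : ∀ m, 0 < R ^ 2 + (b m) ^ 2 * σ ^ 2 := by
      intro m
      have h2 : (as m) ^ 2 ≤ (b m) ^ 2 := pow_le_pow_left₀ (has_nonneg m) (hb_ge m) 2
      have := hinn_as m
      linarith [mul_nonneg (sub_nonneg.2 h2) (sq_nonneg σ)]
    set sb : Fin M → ℝ := fun m => Real.sqrt (R ^ 2 + (b m) ^ 2 * σ ^ 2) with hsb
    clear_value sb
    have hsb_pos : ∀ m, 0 < sb m := by intro m; rw [hsb]; exact Real.sqrt_pos.mpr (hinn_b m)
    obtain ⟨m₁, hm₁⟩ := Finite.exists_min (fun m => sb m / c m)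
    have hterm_ge : ∀ m' : Fin M, 1 ≤ (c m₁ * sb m') / (c m' * sb m₁) := by
      intro m'
      rw [le_div_iff₀ (mul_pos (hc m') (hsb_pos m₁))]
      have := hm₁ m'
      rw [div_le_div_iff₀ (hc m₁) (hc m')] at this
      linarith
    have hsum_ge : (M:ℝ) ≤ ∑ m', (c m₁ * sb m') / (c m' * sb m₁) := by
      have := Finset.card_nsmul_le_sum Finset.univ
        (fun m' => (c m₁ * sb m') / (c m' * sb m₁)) 1 (fun i _ => hterm_ge i)
      simpa using this
    have hfb_ge : (M:ℝ) ≤ fval M R σ c b := by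
      refine hsum_ge.trans ?_
      rw [fval]
      simp only [hsb]
      exact le_ciSup (hB (fun m => ∑ m', (c m * Real.sqrt (R ^ 2 + (b m') ^ 2 * σ ^ 2))
        / (c m' * Real.sqrt (R ^ 2 + (b m) ^ 2 * σ ^ 2)))) m₁
    -- sup of b equals r
    have hsupb_ge : r ≤ (⨆ m, b m) := hasm₀ ▸ (hb_ge m₀).trans (le_ciSup (hB b) m₀)
    have hsupb_nonneg : 0 ≤ (⨆ m, b m) := hr0.le.trans hsupb_ge
    have hW_ge : sM * Real.sqrt (4 * (M:ℝ) - 3)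
        ≤ Real.sqrt (((M:ℝ) - 1) + (2 * fval M R σ c b - 1) ^ 2) := by
      rw [← hsqM]
      apply Real.sqrt_le_sqrt
      have hkey2 : (2 * (M:ℝ) - 1) ^ 2 ≤ (2 * fval M R σ c b - 1) ^ 2 :=
        pow_le_pow_left₀ (by linarith) (by linarith [hfb_ge]) 2
      linarith
    have hsupb : (⨆ m, b m) = r := by
      refine le_antisymm ?_ hsupb_ge
      by_contra h
      push_neg at h
      have hY' : Y < ((d:ℝ) * (R ^ 2 + (⨆ m, b m) ^ 2 * σ ^ 2)) ^ ((1:ℝ)/3) := by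
        rw [← hcube]
        apply Real.rpow_lt_rpow (by positivity) _ (by norm_num)
        have hsq : r ^ 2 < (⨆ m, b m) ^ 2 := pow_lt_pow_left₀ h hr0.le two_ne_zero
        have hfac : 0 < (d:ℝ) * (((⨆ m, b m) ^ 2 - r ^ 2) * σ ^ 2) :=
          mul_pos hdR (mul_pos (sub_pos.2 hsq) (pow_pos hσ 2))
        rw [hE]
        linarith [hfac]
      have : U < rval M d L K S lam R σ c b := by
        rw [rval, ← hYU, ← hsM]
        have hb1 : 0 < 2 * S * sM / lam + sM * Real.sqrt (4 * (M:ℝ) - 3) := by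
          rw [hbrk]; positivity
        calc 2 * L * K * Y * (sM * Q)
            = 2 * L * K * Y * (2 * S * sM / lam + sM * Real.sqrt (4 * (M:ℝ) - 3)) := by
              rw [hbrk]
          _ < 2 * L * K * (((d:ℝ) * (R ^ 2 + (⨆ m, b m) ^ 2 * σ ^ 2)) ^ ((1:ℝ)/3))
              * (2 * S * sM / lam + sM * Real.sqrt (4 * (M:ℝ) - 3)) := by
              apply mul_lt_mul_of_pos_right _ hb1
              apply mul_lt_mul_of_pos_left hY' (by positivity)
          _ ≤ 2 * L * K * (((d:ℝ) * (R ^ 2 + (⨆ m, b m) ^ 2 * σ ^ 2)) ^ ((1:ℝ)/3))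
              * (2 * S * sM / lam + Real.sqrt (((M:ℝ) - 1) + (2 * fval M R σ c b - 1) ^ 2)) := by
              apply mul_le_mul_of_nonneg_left _ _
              · linarith [hW_ge]
              · have h0 : (0:ℝ) < ((d:ℝ) * (R ^ 2 + (⨆ m, b m) ^ 2 * σ ^ 2)) ^ ((1:ℝ)/3) :=
                  lt_trans hYpos hY'
                positivity
      linarith
    -- fval b ≤ M
    have hfb_le : fval M R σ c b ≤ M := by
      have h1 : 2 * L * K * Y
          * (2 * S * sM / lam + Real.sqrt (((M:ℝ) - 1) + (2 * fval M R σ c b - 1) ^ 2)) ≤ U := by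
        have := hrvb
        rw [rval, hsupb, ← hE, hcube, ← hsM] at this
        exact this
      rw [← hYU] at h1
      have h3 : (0:ℝ) < 2 * L * K * Y := by positivity
      have h5 : 2 * S * sM / lam + Real.sqrt (((M:ℝ) - 1) + (2 * fval M R σ c b - 1) ^ 2)
          ≤ sM * Q := (mul_le_mul_iff_right₀ h3).mp h1
      have h2 : Real.sqrt (((M:ℝ) - 1) + (2 * fval M R σ c b - 1) ^ 2)
          ≤ sM * Real.sqrt (4 * (M:ℝ) - 3) := by
        rw [← hbrk] at h5
        linarith
      rw [← hsqM] at h2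
      have h4 : ((M:ℝ) - 1) + (2 * fval M R σ c b - 1) ^ 2
          ≤ ((M:ℝ) - 1) + (2 * (M:ℝ) - 1) ^ 2 := by
        rwa [Real.sqrt_le_sqrt_iff (add_nonneg (by linarith) (sq_nonneg _))] at h2
      by_contra hgt
      push_neg at hgt
      have hkey3 : (2 * (M:ℝ) - 1) ^ 2 < (2 * fval M R σ c b - 1) ^ 2 :=
        pow_lt_pow_left₀ (by linarith) (by linarith) two_ne_zero
      linarith
    have hfb : fval M R σ c b = M := le_antisymm hfb_le hfb_ge
    -- all the ratios sb m / c m are equal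
    have hsum_le : ∑ m', (c m₁ * sb m') / (c m' * sb m₁) ≤ (M:ℝ) := by
      rw [← hfb, fval]
      simp only [hsb]
      exact le_ciSup (hB (fun m => ∑ m', (c m * Real.sqrt (R ^ 2 + (b m') ^ 2 * σ ^ 2))
        / (c m' * Real.sqrt (R ^ 2 + (b m) ^ 2 * σ ^ 2)))) m₁
    have hterm_eq : ∀ m' : Fin M, (c m₁ * sb m') / (c m' * sb m₁) = 1 := by
      intro m'
      by_contra hne
      have hgt : 1 < (c m₁ * sb m') / (c m' * sb m₁) :=
        lt_of_le_of_ne (hterm_ge m') (Ne.symm hne)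
      have : (M:ℝ) < ∑ m'', (c m₁ * sb m'') / (c m'' * sb m₁) := by
        have hlt := Finset.sum_lt_sum (s := Finset.univ)
          (f := fun _ => (1:ℝ)) (g := fun m'' => (c m₁ * sb m'') / (c m'' * sb m₁))
          (fun i _ => hterm_ge i) ⟨m', Finset.mem_univ m', hgt⟩
        simpa using hlt
      linarith
    -- b m₀ = r, hence sb m₀ = sE
    have hbm₀ : b m₀ = r :=
      le_antisymm (hsupb ▸ le_ciSup (hB b) m₀) (hasm₀ ▸ hb_ge m₀)
    have hsbm₀ : sb m₀ = sE := by
      simp only [hsb]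
      rw [hbm₀, hsE, ← hE]
    -- conclude b = as
    have hball : ∀ m, b m = as m := by
      intro m
      have h1 := hterm_eq m
      have h2 := hterm_eq m₀
      rw [div_eq_one_iff_eq (mul_pos (hc m) (hsb_pos m₁)).ne'] at h1
      rw [div_eq_one_iff_eq (mul_pos (hc m₀) (hsb_pos m₁)).ne'] at h2
      -- c m₁ * sb m = c m * sb m₁ ; c m₁ * sb m₀ = c m₀ * sb m₁
      rw [hsbm₀, hcm₀] at h2
      have h3 : sb m * ct * c m₁ = c m * sE * c m₁ := by linear_combination ct * h1 - c m * h2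
      have h4 : sb m * ct = c m * sE := mul_right_cancel₀ (hc m₁).ne' h3
      have hsbm : sb m = c m * sE / ct := by
        rw [eq_div_iff hct_pos.ne']
        exact h4
      have : Real.sqrt (R ^ 2 + (b m) ^ 2 * σ ^ 2) = Real.sqrt (R ^ 2 + (as m) ^ 2 * σ ^ 2) := by
        rw [hs m]
        simp only [hsb] at hsbm
        rw [hsbm]
        ring
      have heq : R ^ 2 + (b m) ^ 2 * σ ^ 2 = R ^ 2 + (as m) ^ 2 * σ ^ 2 := by
        have := congrArg (fun x => x ^ 2) this
        simpa [Real.sq_sqrt (hinn_b m).le, Real.sq_sqrt (hinn_as m).le] using this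
      have hb2 : (b m) ^ 2 = (as m) ^ 2 :=
        mul_right_cancel₀ (pow_pos hσ 2).ne' (by linarith [heq])
      rw [← Real.sqrt_sq (hb_nonneg m), hb2, Real.sqrt_sq (has_nonneg m)]
    exact funext hball
  · rintro rfl
    exact ⟨⟨0, fun m => le_rfl, by simp⟩, hasA⟩
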